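/- Fix an integer N ≥ 2 and real numbers η₁, …, η_{N−1}, η₀ = 0. Let θ = (θ₀, …, θ_{N−1}) : (0,1) → ℝ^N be differentiable and set θ_N := 0 and θ_{−1}(ξ) := ξ·θ₁(ξ). Then the three-term differential recurrence 2ξ(ξ−1)θ_i'(ξ) − (η_i + i + (η_i − i − 6)ξ)θ_i(ξ) + ξ(η_i + i − 2)θ_{i+1}(ξ) + (η_i − i − 2)θ_{i−1}(ξ) = 0 holds for all 0 ≤ i ≤ N−1 and ξ ∈ (0,1) if and only if θ satisfies the Fuchsian system θ'(ξ) = Aθ(ξ)/ξ − Bθ(ξ)/(ξ−1) on (0,1), where A is the N×N lower bidiagonal matrix with A_{0,0} = 0, A_{i,i} = −(η_i + i)/2 and A_{i,i−1} = (η_i − i − 2)/2 for 1 ≤ i ≤ N−1, and B is as defined below. -/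

import Mathlib

open Polynomial

/-- The `N×N` tridiagonal residue matrix at `ξ = 1` for the unbounded whole-plane LLE
at `q = 2` (truncation `η_N = N + 2`): `B₀₀ = 3`, `B₀₁ = -2`, and for `1 ≤ i ≤ N-1`:
`B_{i,i-1} = (η_i - i - 2)/2`, `B_{i,i} = 3 - η_i`, `B_{i,i+1} = (η_i + i - 2)/2`. -/
noncomputable def unboundedB (N : ℕ) (η : ℕ → ℝ) : Matrix (Fin N) (Fin N) ℝ :=
  Matrix.of fun i j =>
    if (i : ℕ) = 0 then
      (if (j : ℕ) = 0 then 3 else if (j : ℕ) = 1 then -2 else 0)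
    else if (j : ℕ) + 1 = (i : ℕ) then (η i - i - 2) / 2
    else if (j : ℕ) = (i : ℕ) then 3 - η i
    else if (j : ℕ) = (i : ℕ) + 1 then (η i + i - 2) / 2
    else 0

/-- The `N×N` lower-bidiagonal residue matrix at `ξ = 0` for the unbounded
whole-plane LLE at `q = 2`: `A₀₀ = 0`, `A_{i,i} = -(η_i + i)/2` and
`A_{i,i-1} = (η_i - i - 2)/2` for `1 ≤ i ≤ N-1`. -/
noncomputable def unboundedA (N : ℕ) (η : ℕ → ℝ) : Matrix (Fin N) (Fin N) ℝ :=
  Matrix.of fun i j =>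
    if (i : ℕ) = 0 then 0
    else if (j : ℕ) = (i : ℕ) then -(η i + i) / 2
    else if (j : ℕ) + 1 = (i : ℕ) then (η i - i - 2) / 2
    else 0

/-- Extension of the family `θ₀, …, θ_{N-1}` by `θ_N := 0` (and `0` beyond) and
`θ_{-1}(ξ) := ξ · θ₁(ξ)`, as used in the unbounded three-term recurrence. -/
noncomputable def unboundedThetaExt (N : ℕ) (θ : ℕ → ℝ → ℝ) : ℤ → ℝ → ℝ :=
  fun i ξ =>
    if i = -1 then ξ * θ 1 ξ
    else if 0 ≤ i ∧ i < (N : ℤ) then θ i.toNat ξ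
    else 0

/-!
Multiplying the Fuchsian system by `ξ(ξ-1)`, which is nonzero on `(0,1)`, turns row `i` into
`ξ(ξ-1)θᵢ' = ((ξ-1)Aθ - ξBθ)ᵢ`. Since `A` is lower bidiagonal and `B` tridiagonal, the right-hand
side only involves `θᵢ₋₁, θᵢ, θᵢ₊₁`, and it is exactly half of the non-derivative part of the
three-term recurrence. In the last row the missing `θ_N` is the convention `θ_N = 0`; in row `0`,
where `η₀ = 0`, the entry `B₀₁ = -2` splits as `-1 - 1`, one half matching `θ₁` and the other
`θ₋₁ = ξθ₁`.
-/

theorem eq_div_sub_div_iff_mul_eq {K : Type*} [Field K] {a b d x y : K} (ha : a ≠ 0)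
    (hb : b ≠ 0) : d = x / a - y / b ↔ a * b * d = b * x - a * y := by
  rw [div_sub_div _ _ ha hb, eq_div_iff (mul_ne_zero ha hb)]
  constructor <;> intro h <;> linear_combination h

theorem sum_fin_ite_val_eq_mul {R : Type*} [Semiring R] (N k : ℕ) (c : R) (f : ℕ → R) :
    ∑ j : Fin N, (if (j : ℕ) = k then c else 0) * f j = c * (if k < N then f k else 0) := by
  rw [Fin.sum_univ_eq_sum_range (fun j => (if j = k then c else 0) * f j)]
  simp only [ite_mul, zero_mul, Finset.sum_ite_eq', Finset.mem_range, mul_ite, mul_zero]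

section Rows

variable {N : ℕ} {η : ℕ → ℝ} {i : Fin N} (j : Fin N)

theorem unboundedA_of_val_eq_zero (hi : (i : ℕ) = 0) : unboundedA N η i j = 0 := by
  simp [unboundedA, hi]

theorem unboundedA_of_val_pos (hi : 0 < (i : ℕ)) :
    unboundedA N η i j = (if (j : ℕ) = i - 1 then (η i - i - 2) / 2 else 0)
      + (if (j : ℕ) = i then -(η i + i) / 2 else 0) := by
  simp only [unboundedA, Matrix.of_apply, hi.ne', if_false]
  split_ifs <;> first | omega | ring

theorem unboundedB_of_val_eq_zero (hi : (i : ℕ) = 0) :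
    unboundedB N η i j = (if (j : ℕ) = 0 then 3 else 0) + (if (j : ℕ) = 1 then -2 else 0) := by
  simp only [unboundedB, Matrix.of_apply, hi]
  split_ifs <;> first | omega | norm_num

theorem unboundedB_of_val_pos (hi : 0 < (i : ℕ)) :
    unboundedB N η i j = (if (j : ℕ) = i - 1 then (η i - i - 2) / 2 else 0)
      + (if (j : ℕ) = i then 3 - η i else 0)
      + (if (j : ℕ) = i + 1 then (η i + i - 2) / 2 else 0) := by
  simp only [unboundedB, Matrix.of_apply, hi.ne', if_false]
  split_ifs <;> first | omega | ring

end Rows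

theorem unboundedThetaExt_natCast (N k : ℕ) (θ : ℕ → ℝ → ℝ) (ξ : ℝ) :
    unboundedThetaExt N θ k ξ = if k < N then θ k ξ else 0 := by
  simp [unboundedThetaExt]

theorem unboundedThetaExt_neg_one (N : ℕ) (θ : ℕ → ℝ → ℝ) (ξ : ℝ) :
    unboundedThetaExt N θ (-1) ξ = ξ * θ 1 ξ := by
  simp [unboundedThetaExt]

open Finset in
theorem two_mul_fuchsian_row {N : ℕ} (hN : 2 ≤ N) {η : ℕ → ℝ} (hη₀ : η 0 = 0)
    (θ : ℕ → ℝ → ℝ) (i : Fin N) (ξ : ℝ) :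
    2 * ((ξ - 1) * ∑ j : Fin N, unboundedA N η i j * θ j ξ
        - ξ * ∑ j : Fin N, unboundedB N η i j * θ j ξ)
      = (η i + i + (η i - i - 6) * ξ) * θ i ξ
        - ξ * (η i + i - 2) * unboundedThetaExt N θ ((i : ℤ) + 1) ξ
        - (η i - i - 2) * unboundedThetaExt N θ ((i : ℤ) - 1) ξ := by
  rcases Nat.eq_zero_or_pos i with hi | hi
  · simp only [unboundedA_of_val_eq_zero _ hi, unboundedB_of_val_eq_zero _ hi, zero_mul,
      sum_const_zero, add_mul, sum_add_distrib, sum_fin_ite_val_eq_mul N _ _ (θ · ξ)]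
    simp only [hi, hη₀, Nat.cast_zero, zero_add, zero_sub]
    rw [unboundedThetaExt_neg_one, ← Nat.cast_one (R := ℤ), unboundedThetaExt_natCast,
      if_pos (by omega), if_pos (by omega)]
    ring
  · simp only [unboundedA_of_val_pos _ hi, unboundedB_of_val_pos _ hi, add_mul,
      sum_add_distrib, sum_fin_ite_val_eq_mul N _ _ (θ · ξ)]
    rw [← Nat.cast_add_one, ← Nat.cast_pred hi, unboundedThetaExt_natCast,
      unboundedThetaExt_natCast, if_pos i.isLt, if_pos (by omega)]
    ring

theorem unbounded_recurrence_iff_fuchsian (N : ℕ) (hN : 2 ≤ N)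
    (η : ℕ → ℝ) (hη₀ : η 0 = 0)
    (θ : ℕ → ℝ → ℝ) :
    (∀ i : ℕ, i < N → ∀ ξ ∈ Set.Ioo (0 : ℝ) 1,
        2 * ξ * (ξ - 1) * deriv (θ i) ξ
          - (η i + i + (η i - i - 6) * ξ) * θ i ξ
          + ξ * (η i + i - 2) * unboundedThetaExt N θ ((i : ℤ) + 1) ξ
          + (η i - i - 2) * unboundedThetaExt N θ ((i : ℤ) - 1) ξ = 0)
    ↔
    (∀ i : Fin N, ∀ ξ ∈ Set.Ioo (0 : ℝ) 1,
        deriv (θ i) ξ =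
          (∑ j : Fin N, unboundedA N η i j * θ j ξ) / ξ
            - (∑ j : Fin N, unboundedB N η i j * θ j ξ) / (ξ - 1)) := by
  refine ⟨fun h i ξ hξ => ?_, fun h i hi ξ hξ => ?_⟩
  · rw [eq_div_sub_div_iff_mul_eq hξ.1.ne' (sub_ne_zero.2 hξ.2.ne)]
    linear_combination (h i i.isLt ξ hξ - two_mul_fuchsian_row hN hη₀ θ i ξ) / 2
  · have hmul := (eq_div_sub_div_iff_mul_eq hξ.1.ne' (sub_ne_zero.2 hξ.2.ne)).1 (h ⟨i, hi⟩ ξ hξ)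
    linear_combination 2 * hmul + two_mul_fuchsian_row hN hη₀ θ ⟨i, hi⟩ ξ
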